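/- Let T be a finite tree and k ≥ 1. For every unordered pair {e,f} of edges of T at edge-distance k−1, there exist endpoints x of e and y of f with d(x,y) = k, and for this pair F({x,y}) = {e,f}; hence the map F from vertex pairs at distance k to edge pairs at distance k−1 is surjective. -/

import Mathlib

open SimpleGraph Polynomial Finset

/-- Distance between vertices, as a function on unordered pairs. -/
noncomputable def sdist {V : Type*} (G : SimpleGraph V) (p : Sym2 V) : ℕ :=
  Sym2.lift ⟨G.dist, fun _ _ => SimpleGraph.dist_comm⟩ p

/-- The Hosoya polynomial `H(G,x) = Σ_{k≥0} d(G,k) x^k`, where `d(G,k)` counts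
unordered pairs of vertices at distance `k` (so `d(G,0) = |V(G)|`). -/
noncomputable def hosoyaPoly {V : Type*} [Fintype V] [DecidableEq V]
    (G : SimpleGraph V) : Polynomial ℝ :=
  ∑ p : Sym2 V, X ^ sdist G p

/-- The edge-Hosoya polynomial, summing over unordered pairs of edges with the
line-graph distance. -/
noncomputable def edgeHosoyaPoly {V : Type*} [Fintype V] [DecidableEq V]
    (G : SimpleGraph V) [DecidableRel G.Adj] : Polynomial ℝ :=
  ∑ p : Sym2 G.edgeSet, X ^ sdist G.lineGraph p

/-- The Wiener index: sum of distances over unordered pairs of vertices. -/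
noncomputable def wienerIndex {V : Type*} [Fintype V] [DecidableEq V]
    (G : SimpleGraph V) : ℕ :=
  ∑ p : Sym2 V, sdist G p

/-- The edge-Wiener index: sum of line-graph distances over unordered pairs of edges. -/
noncomputable def edgeWienerIndex {V : Type*} [Fintype V] [DecidableEq V]
    (G : SimpleGraph V) [DecidableRel G.Adj] : ℕ :=
  ∑ p : Sym2 G.edgeSet, sdist G.lineGraph p

/-- The hyper-Wiener index. -/
noncomputable def hyperWiener {V : Type*} [Fintype V] [DecidableEq V]
    (G : SimpleGraph V) : ℝ :=
  (1/2) * ∑ p : Sym2 V, (sdist G p : ℝ) + (1/2) * ∑ p : Sym2 V, (sdist G p : ℝ)^2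

/-- The edge-hyper-Wiener index. -/
noncomputable def edgeHyperWiener {V : Type*} [Fintype V] [DecidableEq V]
    (G : SimpleGraph V) [DecidableRel G.Adj] : ℝ :=
  (1/2) * ∑ p : Sym2 G.edgeSet, (sdist G.lineGraph p : ℝ) +
  (1/2) * ∑ p : Sym2 G.edgeSet, (sdist G.lineGraph p : ℝ)^2

/-! Choose endpoints `x ∈ e`, `y ∈ f` at maximal distance `M`, and let `x'`, `y'` be the other
endpoints. In a tree the distances from a vertex to the two ends of an edge differ by exactly one,
so `d(x', y) = d(x, y') = M - 1`; then the `x`–`y` geodesic runs through `x'` and `y'`, whence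
`d(x', y') = M - 2` unless `e = f`. Since a walk in either graph yields a walk in the other of
length at most one more between any chosen endpoints,
`M ≤ d_L(e, f) + 1 ≤ d(x', y') + 2 = M`. -/

lemma Sym2.exists_mem_mem_forall_le {α β γ : Type*} [LinearOrder γ] (φ : α → β → γ)
    (e : Sym2 α) (f : Sym2 β) :
    ∃ x ∈ e, ∃ y ∈ f, ∀ u ∈ e, ∀ v ∈ f, φ u v ≤ φ x y := by
  classical
  obtain ⟨⟨x, y⟩, hxy, hmax⟩ := (e.toFinset ×ˢ f.toFinset).exists_max_image
    (fun p ↦ φ p.1 p.2) ⟨(e.out.1, f.out.1), by simp [Sym2.out_fst_mem]⟩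
  simp only [Finset.mem_product, Sym2.mem_toFinset] at hxy hmax
  exact ⟨x, hxy.1, y, hxy.2, fun u hu v hv ↦ hmax (u, v) ⟨hu, hv⟩⟩

namespace SimpleGraph

variable {V : Type*} {G : SimpleGraph V}

lemma edist_le_one_of_mem_edgeSet {e : Sym2 V} (he : e ∈ G.edgeSet) {u v : V}
    (hu : u ∈ e) (hv : v ∈ e) : G.edist u v ≤ 1 := by
  rw [edist_le_one_iff_adj_or_eq]
  by_cases huv : u = v
  · exact Or.inr huv
  · exact Or.inl (G.mem_edgeSet.mp ((Sym2.mem_and_mem_iff huv).mp ⟨hu, hv⟩ ▸ he))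

lemma lineGraph_edist_le_one_of_mem {e f : G.edgeSet} {u : V} (he : u ∈ (e : Sym2 V))
    (hf : u ∈ (f : Sym2 V)) : G.lineGraph.edist e f ≤ 1 := by
  rw [edist_le_one_iff_adj_or_eq, lineGraph_adj_iff_exists]
  by_cases hef : e = f
  · exact Or.inr hef
  · exact Or.inl ⟨hef, u, he, hf⟩

lemma lineGraph_edist_le_length_add_one {e f : G.edgeSet} {u v : V} (p : G.Walk u v)
    (hu : u ∈ (e : Sym2 V)) (hv : v ∈ (f : Sym2 V)) :
    G.lineGraph.edist e f ≤ p.length + 1 := by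
  induction p generalizing e with
  | nil => simpa using lineGraph_edist_le_one_of_mem hu hv
  | @cons a b _ hab q ih =>
    let g : G.edgeSet := ⟨s(a, b), hab⟩
    calc G.lineGraph.edist e f ≤ G.lineGraph.edist e g + G.lineGraph.edist g f :=
          SimpleGraph.edist_triangle
      _ ≤ 1 + (q.length + 1) :=
          add_le_add (lineGraph_edist_le_one_of_mem hu (Sym2.mem_mk_left a b))
            (ih (e := g) (Sym2.mem_mk_right a b) hv)
      _ = (Walk.cons hab q).length + 1 := by push_cast [Walk.length_cons]; ring

lemma edist_le_length_add_one {e f : G.edgeSet} (p : G.lineGraph.Walk e f) {u v : V}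
    (hu : u ∈ (e : Sym2 V)) (hv : v ∈ (f : Sym2 V)) : G.edist u v ≤ p.length + 1 := by
  induction p generalizing u with
  | nil => simpa using edist_le_one_of_mem_edgeSet (Subtype.prop _) hu hv
  | @cons e g _ heg q ih =>
    obtain ⟨-, c, hce, hcg⟩ := lineGraph_adj_iff_exists.mp heg
    calc G.edist u v ≤ G.edist u c + G.edist c v := SimpleGraph.edist_triangle
      _ ≤ 1 + (q.length + 1) := add_le_add (edist_le_one_of_mem_edgeSet e.2 hu hce) (ih hcg hv)
      _ = (Walk.cons heg q).length + 1 := by push_cast [Walk.length_cons]; ring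

lemma lineGraph_edist_le_edist_add_one {e f : G.edgeSet} {u v : V} (hu : u ∈ (e : Sym2 V))
    (hv : v ∈ (f : Sym2 V)) : G.lineGraph.edist e f ≤ G.edist u v + 1 := by
  by_cases hr : G.Reachable u v
  · obtain ⟨p, hp⟩ := hr.exists_walk_length_eq_edist
    exact hp ▸ lineGraph_edist_le_length_add_one p hu hv
  · simp [edist_eq_top_of_not_reachable hr]

lemma edist_le_lineGraph_edist_add_one {e f : G.edgeSet} {u v : V} (hu : u ∈ (e : Sym2 V))
    (hv : v ∈ (f : Sym2 V)) : G.edist u v ≤ G.lineGraph.edist e f + 1 := by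
  by_cases hr : G.lineGraph.Reachable e f
  · obtain ⟨p, hp⟩ := hr.exists_walk_length_eq_edist
    exact hp ▸ edist_le_length_add_one p hu hv
  · simp [edist_eq_top_of_not_reachable hr]

lemma Connected.lineGraph_dist_le_dist_add_one (hG : G.Connected) {e f : G.edgeSet} {u v : V}
    (hu : u ∈ (e : Sym2 V)) (hv : v ∈ (f : Sym2 V)) :
    G.lineGraph.dist e f ≤ G.dist u v + 1 := by
  have h := lineGraph_edist_le_edist_add_one hu hv
  rw [← (hG u v).coe_dist_eq_edist] at h
  exact_mod_cast ENat.toNat_le_toNat h (by simp)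

lemma Connected.dist_le_lineGraph_dist_add_one (hG : G.Connected) {e f : G.edgeSet} {u v : V}
    (hu : u ∈ (e : Sym2 V)) (hv : v ∈ (f : Sym2 V)) :
    G.dist u v ≤ G.lineGraph.dist e f + 1 := by
  have hr : G.lineGraph.Reachable e f := by
    refine reachable_of_edist_ne_top
      (ne_top_of_le_ne_top ?_ (lineGraph_edist_le_edist_add_one hu hv))
    simp [← (hG u v).coe_dist_eq_edist]
  have h := edist_le_lineGraph_edist_add_one (G := G) hu hv
  rw [← (hG u v).coe_dist_eq_edist, ← hr.coe_dist_eq_edist] at h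
  exact_mod_cast h

lemma IsTree.dist_add_two_le_of_adj_of_adj (hT : G.IsTree) {x x' y y' : V} (hx : G.Adj x x')
    (hy : G.Adj y y') (hx' : G.dist x' y + 1 = G.dist x y) (hy' : G.dist x y' + 1 = G.dist x y)
    (h2 : 2 ≤ G.dist x y) : G.dist x' y' + 2 ≤ G.dist x y := by
  obtain ⟨q, -, hq⟩ := (hT.connected x' y).exists_path_of_dist
  obtain ⟨r, -, hr⟩ := (hT.connected x y').exists_path_of_dist
  have hpq : (Walk.cons hx q).IsPath :=
    Walk.isPath_of_length_eq_dist _ (by rw [Walk.length_cons, hq, hx'])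
  have hpr : (r.concat hy.symm).IsPath :=
    Walk.isPath_of_length_eq_dist _ (by rw [Walk.length_concat, hr, hy'])
  -- both walks are the geodesic from `x` to `y`, so it runs through `x'` and `y'`
  have hqr : Walk.cons hx q = r.concat hy.symm :=
    congrArg Subtype.val ((hT.isAcyclic.subsingleton_path x y).elim ⟨_, hpq⟩ ⟨_, hpr⟩)
  have hq0 : ¬ q.Nil := Walk.not_nil_iff_lt_length.mpr (by omega)
  have hy'q : y' = q.penultimate := by
    simpa [Walk.penultimate_cons_of_not_nil _ _ hq0, Walk.penultimate_concat] using
      (congrArg Walk.penultimate hqr).symm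
  have := dist_le q.dropLast
  rw [Walk.length_dropLast, ← hy'q] at this
  omega

theorem IsTree.exists_dist_eq_lineGraph_dist_add_one (hT : G.IsTree) (e f : G.edgeSet) :
    ∃ x x' y y' : V, G.Adj x x' ∧ s(x, x') = e ∧ G.Adj y y' ∧ s(y, y') = f ∧
      G.dist x y = G.lineGraph.dist e f + 1 ∧ G.dist x' y = G.lineGraph.dist e f ∧
      G.dist y' x = G.lineGraph.dist e f := by
  obtain ⟨x, hx, y, hy, hmax⟩ := Sym2.exists_mem_mem_forall_le G.dist (e : Sym2 V) f
  obtain ⟨x', hex⟩ := Sym2.mem_iff_exists.mp hx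
  obtain ⟨y', hfy⟩ := Sym2.mem_iff_exists.mp hy
  have hxx' : G.Adj x x' := G.mem_edgeSet.mp (hex ▸ e.2)
  have hyy' : G.Adj y y' := G.mem_edgeSet.mp (hfy ▸ f.2)
  have hx' : x' ∈ (e : Sym2 V) := hex ▸ Sym2.mem_mk_right x x'
  have hy' : y' ∈ (f : Sym2 V) := hfy ▸ Sym2.mem_mk_right y y'
  have hx'y : G.dist x' y + 1 = G.dist x y := by
    have h := hT.dist_eq_dist_add_one_of_adj y hxx'
    rw [dist_comm (u := y) (v := x), dist_comm (u := y) (v := x')] at h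
    have := hmax x' hx' y hy
    omega
  have hxy' : G.dist x y' + 1 = G.dist x y := by
    have h := hT.dist_eq_dist_add_one_of_adj x hyy'
    have := hmax x hx y' hy'
    omega
  have hup := hT.connected.dist_le_lineGraph_dist_add_one hx hy
  have hlow : G.lineGraph.dist e f + 1 ≤ G.dist x y := by
    rcases le_or_gt 2 (G.dist x y) with h2 | h2
    · have := hT.dist_add_two_le_of_adj_of_adj hxx' hyy' hx'y hxy' h2
      have := hT.connected.lineGraph_dist_le_dist_add_one hx' hy'
      omega
    · have hx'_eq : x' = y := (hT.connected x' y).dist_eq_zero_iff.mp (by omega)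
      have hy'_eq : y' = x := ((hT.connected x y').dist_eq_zero_iff.mp (by omega)).symm
      have hef : e = f := Subtype.ext (by rw [hex, hfy, hx'_eq, hy'_eq, Sym2.eq_swap])
      rw [hef, dist_self]
      omega
  exact ⟨x, x', y, y', hxx', hex.symm, hyy', hfy.symm, by omega, by omega,
    by rw [dist_comm]; omega⟩

end SimpleGraph

/-- Surjectivity of the map `F`: every unordered pair of edges at
line-graph distance `k - 1` arises as the pair of end edges of the path between
some endpoints `x, y` at distance `k`. -/
theorem stmt19 {V : Type*} (T : SimpleGraph V) (hT : T.IsTree)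
    (k : ℕ) (hk : 1 ≤ k) (e f : T.edgeSet)
    (hd : T.lineGraph.dist e f = k - 1) :
    ∃ x y x' y' : V, x ∈ (e : Sym2 V) ∧ y ∈ (f : Sym2 V) ∧ T.dist x y = k ∧
      T.Adj x x' ∧ T.dist x' y = k - 1 ∧ s(x, x') = (e : Sym2 V) ∧
      T.Adj y y' ∧ T.dist y' x = k - 1 ∧ s(y, y') = (f : Sym2 V) := by
  obtain ⟨x, x', y, y', hxx', hex, hyy', hfy, hxy, hx'y, hy'x⟩ :=
    hT.exists_dist_eq_lineGraph_dist_add_one e f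
  rw [hd] at hxy hx'y hy'x
  exact ⟨x, y, x', y', hex ▸ Sym2.mem_mk_left x x', hfy ▸ Sym2.mem_mk_left y y', by omega,
    hxx', hx'y, hex, hyy', hy'x, hfy⟩
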